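/- arXiv:1405.4929 — 2 statements merged into one kernel-verified Lean document; each statement's English description precedes it below -/
import Mathlib

section
/- For every topological space X, Tkachuk's game θ(X) and the game G_1(𝒪_X, 𝒟_X) are dual games: ONE has a winning strategy in θ(X) if and only if TWO has a winning strategy in G_1(𝒪_X, 𝒟_X), and TWO has a winning strategy in θ(X) if and only if ONE has a winning strategy in G_1(𝒪_X, 𝒟_X). -/
open Set

/-- `GDom R` is the set of dominating families of the relation `R`:
sets `Z ⊆ B` such that every `a ∈ A` is dominated by some `b ∈ Z`. -/
def GDom {α β : Type*} (R : α → β → Prop) : Set (Set β) :=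
  {Z | ∀ a : α, ∃ b ∈ Z, R a b}

/-- A relation is total: every element of the domain is dominated by something. -/
def IsTotalRel {α β : Type*} (R : α → β → Prop) : Prop :=
  ∀ a : α, ∃ b : β, R a b

/-- The product of two relations. -/
def GProd {α β α' β' : Type*} (R : α → β → Prop) (R' : α' → β' → Prop) :
    α × α' → β × β' → Prop :=
  fun a b => R a.1 b.1 ∧ R' a.2 b.2

/-- The finite history consisting of the first `n` moves of the sequence `b`. -/
def GHist {β : Type*} (b : ℕ → β) (n : ℕ) : List β :=
  List.ofFn fun i : Fin n => b i

/-- ONE has a winning strategy in the game `G(P,Q)`: in inning `n` ONE plays `aₙ ∈ A`,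
TWO answers `bₙ` with `R aₙ bₙ`; ONE wins iff `{bₙ : n} ∈ GDom T`. -/
def OneWinsG {α β γ : Type*} (R : α → β → Prop) (T : γ → β → Prop) : Prop :=
  ∃ σ : List β → α, ∀ b : ℕ → β,
    (∀ n, R (σ (GHist b n)) (b n)) → Set.range b ∈ GDom T

/-- TWO has a winning strategy in the game `G(P,Q)`. -/
def TwoWinsG {α β γ : Type*} (R : α → β → Prop) (T : γ → β → Prop) : Prop :=
  ∃ τ : List α → β, ∀ a : ℕ → α,
    (∀ n, R (a n) (τ (GHist a (n + 1)))) ∧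
    Set.range (fun n => τ (GHist a (n + 1))) ∉ GDom T

/-- ONE has a winning strategy in the game `G₁(𝒜,ℬ)`: in inning `n` ONE plays `Aₙ ∈ 𝒜`,
TWO answers `bₙ ∈ Aₙ`; TWO wins iff `{bₙ : n} ∈ ℬ`. -/
def OneWinsG1 {β : Type*} (𝒜 ℬ : Set (Set β)) : Prop :=
  ∃ σ : List β → Set β, (∀ h, σ h ∈ 𝒜) ∧
    ∀ b : ℕ → β, (∀ n, b n ∈ σ (GHist b n)) → Set.range b ∉ ℬ

/-- TWO has a winning strategy in the game `G₁(𝒜,ℬ)`. -/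
def TwoWinsG1 {β : Type*} (𝒜 ℬ : Set (Set β)) : Prop :=
  ∃ τ : List (Set β) → β, ∀ S : ℕ → Set β, (∀ n, S n ∈ 𝒜) →
    (∀ n, τ (GHist S (n + 1)) ∈ S n) ∧
    Set.range (fun n => τ (GHist S (n + 1))) ∈ ℬ

/-- TWO has a winning strategy in the game `G_fin(𝒜,ℬ)`: in inning `n` ONE plays `Aₙ ∈ 𝒜`,
TWO answers a finite `Fₙ ⊆ Aₙ`; TWO wins iff `⋃ₙ Fₙ ∈ ℬ`. -/
def TwoWinsGfin {β : Type*} (𝒜 ℬ : Set (Set β)) : Prop :=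
  ∃ τ : List (Set β) → Set β, ∀ S : ℕ → Set β, (∀ n, S n ∈ 𝒜) →
    (∀ n, τ (GHist S (n + 1)) ⊆ S n ∧ (τ (GHist S (n + 1))).Finite) ∧
    (⋃ n, τ (GHist S (n + 1))) ∈ ℬ

/-- `(𝒜,ℬ)`-Lindelöf: every member of `𝒜` has a countable subset belonging to `ℬ`. -/
def LindelofFam {β : Type*} (𝒜 ℬ : Set (Set β)) : Prop :=
  ∀ S ∈ 𝒜, ∃ C ⊆ S, C.Countable ∧ C ∈ ℬ

/-- The selection principle `S₁(𝒜,ℬ)`. -/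
def SelS1 {β : Type*} (𝒜 ℬ : Set (Set β)) : Prop :=
  ∀ A : ℕ → Set β, (∀ n, A n ∈ 𝒜) →
    ∃ b : ℕ → β, (∀ n, b n ∈ A n) ∧ Set.range b ∈ ℬ

/-- The selection principle `S_fin(𝒜,ℬ)`. -/
def SelSfin {β : Type*} (𝒜 ℬ : Set (Set β)) : Prop :=
  ∀ A : ℕ → Set β, (∀ n, A n ∈ 𝒜) →
    ∃ F : ℕ → Set β, (∀ n, F n ⊆ A n ∧ (F n).Finite) ∧ (⋃ n, F n) ∈ ℬ

/-- `𝒪_X`: the family of open covers of `X`. -/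
def OpenCovers (X : Type*) [TopologicalSpace X] : Set (Set (Set X)) :=
  {𝒰 | (∀ U ∈ 𝒰, IsOpen U) ∧ ⋃₀ 𝒰 = Set.univ}

/-- ONE has a winning strategy in the point-open game on `X`. -/
def OneWinsPointOpen (X : Type*) [TopologicalSpace X] : Prop :=
  ∃ σ : List (Set X) → X, ∀ U : ℕ → Set X,
    (∀ n, IsOpen (U n) ∧ σ (GHist U n) ∈ U n) → Set.range U ∈ OpenCovers X

/-- TWO has a winning strategy in the point-open game on `X`. -/
def TwoWinsPointOpen (X : Type*) [TopologicalSpace X] : Prop :=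
  ∃ τ : List X → Set X, ∀ x : ℕ → X,
    (∀ n, IsOpen (τ (GHist x (n + 1))) ∧ x n ∈ τ (GHist x (n + 1))) ∧
    Set.range (fun n => τ (GHist x (n + 1))) ∉ OpenCovers X

/-- `𝔇_X`: the family of dense subsets of `X`. -/
def DenseSets (X : Type*) [TopologicalSpace X] : Set (Set X) :=
  {D | Dense D}

/-- ONE has a winning strategy in the point-picking game `G^D_ω(X)` of Berner and Juhász. -/
def OneWinsPointPicking (X : Type*) [TopologicalSpace X] : Prop :=
  ∃ σ : List X → Set X, (∀ h, IsOpen (σ h) ∧ (σ h).Nonempty) ∧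
    ∀ x : ℕ → X, (∀ n, x n ∈ σ (GHist x n)) → Dense (Set.range x)

/-- TWO has a winning strategy in the point-picking game `G^D_ω(X)`. -/
def TwoWinsPointPicking (X : Type*) [TopologicalSpace X] : Prop :=
  ∃ τ : List (Set X) → X, ∀ U : ℕ → Set X,
    (∀ n, IsOpen (U n) ∧ (U n).Nonempty) →
    (∀ n, τ (GHist U (n + 1)) ∈ U n) ∧
    ¬ Dense (Set.range fun n => τ (GHist U (n + 1)))

/-- `𝒟_X`: families of open sets whose union is dense in `X`. -/
def DenseUnionFams (X : Type*) [TopologicalSpace X] : Set (Set (Set X)) :=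
  {𝒰 | (∀ U ∈ 𝒰, IsOpen U) ∧ Dense (⋃₀ 𝒰)}

/-- ONE has a winning strategy in Tkachuk's game `θ(X)`. -/
def OneWinsTheta (X : Type*) [TopologicalSpace X] : Prop :=
  ∃ σ : List (Set X) → X, ∀ U : ℕ → Set X,
    (∀ n, IsOpen (U n) ∧ σ (GHist U n) ∈ U n) → Dense (⋃ n, U n)

/-- TWO has a winning strategy in Tkachuk's game `θ(X)`. -/
def TwoWinsTheta (X : Type*) [TopologicalSpace X] : Prop :=
  ∃ τ : List X → Set X, ∀ x : ℕ → X,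
    (∀ n, IsOpen (τ (GHist x (n + 1))) ∧ x n ∈ τ (GHist x (n + 1))) ∧
    ¬ Dense (⋃ n, τ (GHist x (n + 1)))

/-- `Ω_x`: the family of subsets of `X` having `x` in their closure. -/
def OmegaPt {X : Type*} [TopologicalSpace X] (x : X) : Set (Set X) :=
  {A | x ∈ closure A}

/-- ONE has a winning strategy in Gruenhage's game `G^c_{O,P}(X,x)`. -/
def OneWinsGruenhage {X : Type*} [TopologicalSpace X] (x : X) : Prop :=
  ∃ σ : List X → Set X, (∀ h, IsOpen (σ h) ∧ x ∈ σ h) ∧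
    ∀ y : ℕ → X, (∀ n, y n ∈ σ (GHist y n)) → x ∈ closure (Set.range y)

/-- TWO has a winning strategy in Gruenhage's game `G^c_{O,P}(X,x)`. -/
def TwoWinsGruenhage {X : Type*} [TopologicalSpace X] (x : X) : Prop :=
  ∃ τ : List (Set X) → X, ∀ V : ℕ → Set X,
    (∀ n, IsOpen (V n) ∧ x ∈ V n) →
    (∀ n, τ (GHist V (n + 1)) ∈ V n) ∧
    x ∉ closure (Set.range fun n => τ (GHist V (n + 1)))

/-- ONE has a winning strategy in the compact-open game on `X`. -/
def OneWinsCompactOpen (X : Type*) [TopologicalSpace X] : Prop :=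
  ∃ σ : List (Set X) → Set X, (∀ h, IsCompact (σ h)) ∧
    ∀ U : ℕ → Set X, (∀ n, IsOpen (U n) ∧ σ (GHist U n) ⊆ U n) →
      (⋃ n, U n) = Set.univ

/-- `⪯` is downwards `P`-compatible. -/
def DownwardsCompat {α β : Type*} (R : α → β → Prop) (le : β → β → Prop) : Prop :=
  ∀ a b₁ b₂, R a b₁ → R a b₂ → ∃ b, R a b ∧ le b b₁ ∧ le b b₂

/-- `⪯` is upwards `Q`-compatible. -/
def UpwardsCompat {γ β : Type*} (T : γ → β → Prop) (le : β → β → Prop) : Prop :=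
  ∀ c b₁ b₂, T c b₁ → le b₁ b₂ → T c b₂

/-- `⪯` is countably downwards `P`-compatible. -/
def CountablyDownwardsCompat {α β : Type*} (R : α → β → Prop) (le : β → β → Prop) : Prop :=
  ∀ a, ∀ E : Set β, E.Countable → E.Nonempty → (∀ b ∈ E, R a b) →
    ∃ b', R a b' ∧ ∀ b ∈ E, le b' b

/-- A relation is `ℵ₀`-preserving if some partial order on `B` is both upwards
compatible and countably downwards compatible with it. -/
def Aleph0Preserving {α β : Type*} (R : α → β → Prop) : Prop :=
  ∃ le : β → β → Prop, IsPartialOrder β le ∧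
    UpwardsCompat R le ∧ CountablyDownwardsCompat R le

/-- `Dom_γ(T)`: the γ-dominating sequences of the relation `T`. -/
def GDomGamma {γ β : Type*} (T : γ → β → Prop) : Set (ℕ → β) :=
  {z | ∀ c : γ, {n : ℕ | ¬ T c (z n)}.Finite}

/-- ONE has a winning strategy in the game `G_γ(P,Q)`. -/
def OneWinsGgamma {α β γ : Type*} (R : α → β → Prop) (T : γ → β → Prop) : Prop :=
  ∃ σ : List β → α, ∀ b : ℕ → β,
    (∀ n, R (σ (GHist b n)) (b n)) → b ∈ GDomGamma T

/-- TWO has a winning strategy in the game `G_γ(P,Q)`. -/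
def TwoWinsGgamma {α β γ : Type*} (R : α → β → Prop) (T : γ → β → Prop) : Prop :=
  ∃ τ : List α → β, ∀ a : ℕ → α,
    (∀ n, R (a n) (τ (GHist a (n + 1)))) ∧
    (fun n => τ (GHist a (n + 1))) ∉ GDomGamma T

/-- ONE has a winning strategy in the game `G₁(𝒜, Dom_γ(T))`. -/
def OneWinsG1gamma {β γ : Type*} (𝒜 : Set (Set β)) (T : γ → β → Prop) : Prop :=
  ∃ σ : List β → Set β, (∀ h, σ h ∈ 𝒜) ∧
    ∀ b : ℕ → β, (∀ n, b n ∈ σ (GHist b n)) → b ∉ GDomGamma T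

/-- TWO has a winning strategy in the game `G₁(𝒜, Dom_γ(T))`. -/
def TwoWinsG1gamma {β γ : Type*} (𝒜 : Set (Set β)) (T : γ → β → Prop) : Prop :=
  ∃ τ : List (Set β) → β, ∀ S : ℕ → Set β, (∀ n, S n ∈ 𝒜) →
    (∀ n, τ (GHist S (n + 1)) ∈ S n) ∧
    (fun n => τ (GHist S (n + 1))) ∈ GDomGamma T

/-- The `ℵ₀`-modification of a relation: moves become nonempty countable subsets of `B`,
dominated pointwise. -/
def CountMod {α β : Type*} (R : α → β → Prop) :
    α → {E : Set β // E.Countable ∧ E.Nonempty} → Prop :=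
  fun a E => ∀ b ∈ E.1, R a b

/-!
Both dualities are proved by letting one player's strategy steer the other game. A strategy only
sees the opponent's moves, so the translated strategy replays the whole play from them to recover
its own earlier moves (`replay`).

The hard direction turns a winning strategy `τ` of TWO in `G₁(𝒪_X, 𝒟_X)` into one for ONE in
`θ(X)`. After any finite history of open covers there is a point `x` such that every open
neighbourhood of `x` contains TWO's answer `τ` to some open cover: otherwise the neighbourhoods
witnessing the failure form an open cover whose answer lies in one of them. ONE plays such a point,
and when TWO answers with `V ∋ x` ONE pretends to have played a cover whose answer lies in `V`;
since `τ` wins, the union of the answers, and hence of the `V`s, is dense.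
-/

open Classical

section Replay

variable {α β : Type*}

theorem GHist_succ (b : ℕ → β) (n : ℕ) : GHist b (n + 1) = GHist b n ++ [b n] := by
  rw [GHist, List.ofFn_succ']
  simp [GHist, List.concat_eq_append]

theorem forall_mem_GHist {P : β → Prop} {b : ℕ → β} {n : ℕ} :
    (∀ x ∈ GHist b n, P x) ↔ ∀ i < n, P (b i) := by
  simp [GHist, List.mem_ofFn, Fin.forall_iff]

theorem of_forall_GHist {P : β → Prop} {Q : List β → β → Prop}
    (h : ∀ b : ℕ → β, (∀ n, P (b n)) → ∀ n, Q (GHist b n) (b n))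
    {l : List β} (hl : ∀ x ∈ l, P x) {y : β} (hy : P y) : Q l y := by
  have key := h (fun i => (l ++ [y]).getD i y) fun i => by
    rcases lt_or_ge i (l ++ [y]).length with hi | hi
    · rw [List.getD_eq_getElem _ _ hi]
      rcases List.mem_append.1 (List.getElem_mem hi) with hx | hx
      · exact hl _ hx
      · rwa [List.mem_singleton.1 hx]
    · rwa [List.getD_eq_default _ _ hi]
  have hhist : GHist (fun i => (l ++ [y]).getD i y) l.length = l :=
    List.ext_getElem (by simp [GHist]) fun i _ hi => by simp [GHist]
  have hlast : (l ++ [y]).getD l.length y = y := by simp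
  have h := key l.length
  rwa [hhist, hlast] at h

/-- The own moves of a player answering each opponent move `a` by `step ownHistory a`. -/
def replay (step : List β → α → β) (l : List α) : List β :=
  l.foldl (fun own a => own ++ [step own a]) []

theorem replay_append_singleton (step : List β → α → β) (l : List α) (a : α) :
    replay step (l ++ [a]) = replay step l ++ [step (replay step l) a] := by
  simp [replay, List.foldl_append]

theorem replay_GHist (step : List β → α → β) (a : ℕ → α) (n : ℕ) :
    replay step (GHist a n) = GHist (fun m => step (replay step (GHist a m)) (a m)) n := by
  induction n with
  | zero => rfl
  | succ n ih => rw [GHist_succ, GHist_succ, replay_append_singleton, ih]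

def replayLast (step : List β → α → β) (d : β) (h : List α) : β :=
  (replay step h).getLastD d

theorem replayLast_GHist_succ (step : List β → α → β) (d : β) (a : ℕ → α) (n : ℕ) :
    replayLast step d (GHist a (n + 1)) =
      step (GHist (fun m => replayLast step d (GHist a (m + 1))) n) (a n) := by
  have h : ∀ m, replayLast step d (GHist a (m + 1)) = step (replay step (GHist a m)) (a m) := by
    intro m
    simp [replayLast, GHist_succ, replay_append_singleton]
  rw [h, funext h, replay_GHist]

end Replay

section Covers

variable {X : Type*} [TopologicalSpace X]

theorem exists_mem_of_mem_openCovers {𝒰 : Set (Set X)} (h𝒰 : 𝒰 ∈ OpenCovers X) (x : X) :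
    ∃ U ∈ 𝒰, x ∈ U := by
  simpa only [← mem_sUnion, h𝒰.2] using mem_univ x

theorem range_mem_openCovers {V : X → Set X} (hV : ∀ x, IsOpen (V x) ∧ x ∈ V x) :
    range V ∈ OpenCovers X :=
  ⟨forall_mem_range.2 fun x => (hV x).1,
    eq_univ_of_forall fun x => mem_sUnion_of_mem (hV x).2 (mem_range_self x)⟩

theorem range_mem_denseUnionFams {U : ℕ → Set X} (hU : ∀ n, IsOpen (U n)) :
    range U ∈ DenseUnionFams X ↔ Dense (⋃ n, U n) := by
  simp [DenseUnionFams, hU, sUnion_range]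

theorem exists_forall_nhds_exists_openCover_subset {τ : List (Set (Set X)) → Set X}
    (hτ : ∀ s : List (Set (Set X)), (∀ 𝒰 ∈ s, 𝒰 ∈ OpenCovers X) →
      ∀ 𝒰 ∈ OpenCovers X, τ (s ++ [𝒰]) ∈ 𝒰)
    {s : List (Set (Set X))} (hs : ∀ 𝒰 ∈ s, 𝒰 ∈ OpenCovers X) :
    ∃ x : X, ∀ V, IsOpen V → x ∈ V → ∃ 𝒰 ∈ OpenCovers X, τ (s ++ [𝒰]) ⊆ V := by
  by_contra! h
  choose V hVopen hxV hV using h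
  have hcover := range_mem_openCovers fun x => ⟨hVopen x, hxV x⟩
  obtain ⟨y, hy⟩ := hτ s hs _ hcover
  exact hV y _ hcover hy.ge

end Covers

section Duality

variable {X : Type*} [TopologicalSpace X]

theorem twoWinsG1_of_oneWinsTheta (h : OneWinsTheta X) :
    TwoWinsG1 (OpenCovers X) (DenseUnionFams X) := by
  obtain ⟨σ, hσ⟩ := h
  let step : List (Set X) → Set (Set X) → Set X := fun t 𝒰 => epsilon fun U => U ∈ 𝒰 ∧ σ t ∈ U
  refine ⟨replayLast step ∅, fun 𝒰 h𝒰 => ?_⟩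
  set U := fun n => replayLast step ∅ (GHist 𝒰 (n + 1))
  have hUeq : ∀ n, U n = step (GHist U n) (𝒰 n) := replayLast_GHist_succ step ∅ 𝒰
  have hU n : U n ∈ 𝒰 n ∧ σ (GHist U n) ∈ U n := by
    rw [hUeq n]
    exact epsilon_spec (exists_mem_of_mem_openCovers (h𝒰 n) _)
  have hopen n : IsOpen (U n) := (h𝒰 n).1 _ (hU n).1
  exact ⟨fun n => (hU n).1,
    (range_mem_denseUnionFams hopen).2 (hσ U fun n => ⟨hopen n, (hU n).2⟩)⟩

theorem oneWinsTheta_of_twoWinsG1 (h : TwoWinsG1 (OpenCovers X) (DenseUnionFams X)) :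
    OneWinsTheta X := by
  obtain ⟨τ, hτ⟩ := h
  have hτ' : ∀ s : List (Set (Set X)), (∀ 𝒰 ∈ s, 𝒰 ∈ OpenCovers X) →
      ∀ 𝒰 ∈ OpenCovers X, τ (s ++ [𝒰]) ∈ 𝒰 := fun s hs 𝒰 h𝒰 =>
    of_forall_GHist (Q := fun s 𝒰 => τ (s ++ [𝒰]) ∈ 𝒰)
      (fun S hS n => GHist_succ S n ▸ (hτ S hS).1 n) hs h𝒰
  obtain ⟨x₀, -⟩ := exists_forall_nhds_exists_openCover_subset hτ' (s := []) (by simp)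
  have : Nonempty X := ⟨x₀⟩
  let point : List (Set (Set X)) → X := fun s =>
    epsilon fun x => ∀ V, IsOpen V → x ∈ V → ∃ 𝒰 ∈ OpenCovers X, τ (s ++ [𝒰]) ⊆ V
  let step : List (Set (Set X)) → Set X → Set (Set X) := fun s V =>
    epsilon fun 𝒰 => 𝒰 ∈ OpenCovers X ∧ τ (s ++ [𝒰]) ⊆ V
  refine ⟨fun h => point (replay step h), fun V hV => ?_⟩
  set 𝒰 := fun n => step (replay step (GHist V n)) (V n)
  have hreplay : ∀ n, replay step (GHist V n) = GHist 𝒰 n := replay_GHist step V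
  simp only [hreplay] at hV
  have h𝒰eq : ∀ n, 𝒰 n = step (GHist 𝒰 n) (V n) := fun n => by rw [← hreplay]
  have h𝒰 n : 𝒰 n ∈ OpenCovers X ∧ τ (GHist 𝒰 (n + 1)) ⊆ V n := by
    induction n using Nat.strong_induction_on with
    | _ n ih =>
      have hpoint := epsilon_spec (exists_forall_nhds_exists_openCover_subset hτ'
        (forall_mem_GHist.2 fun i hi => (ih i hi).1))
      rw [GHist_succ, h𝒰eq n]
      exact epsilon_spec (hpoint (V n) (hV n).1 (hV n).2)
  have hwin := (hτ 𝒰 fun n => (h𝒰 n).1).2.2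
  rw [sUnion_range] at hwin
  exact hwin.mono (iUnion_mono fun n => (h𝒰 n).2)

theorem twoWinsTheta_of_oneWinsG1 (h : OneWinsG1 (OpenCovers X) (DenseUnionFams X)) :
    TwoWinsTheta X := by
  obtain ⟨σ, hσ𝒪, hσ⟩ := h
  let step : List (Set X) → X → Set X := fun t x => epsilon fun U => U ∈ σ t ∧ x ∈ U
  refine ⟨replayLast step ∅, fun x => ?_⟩
  set U := fun n => replayLast step ∅ (GHist x (n + 1))
  have hUeq : ∀ n, U n = step (GHist U n) (x n) := replayLast_GHist_succ step ∅ x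
  have hU n : U n ∈ σ (GHist U n) ∧ x n ∈ U n := by
    rw [hUeq n]
    exact epsilon_spec (exists_mem_of_mem_openCovers (hσ𝒪 _) _)
  have hopen n : IsOpen (U n) := (hσ𝒪 _).1 _ (hU n).1
  exact ⟨fun n => ⟨hopen n, (hU n).2⟩,
    fun hdense => hσ U (fun n => (hU n).1) ((range_mem_denseUnionFams hopen).2 hdense)⟩

theorem oneWinsG1_of_isEmpty [IsEmpty X] : OneWinsG1 (OpenCovers X) (DenseUnionFams X) :=
  ⟨fun _ => ∅, fun _ => ⟨by simp, by simp [eq_iff_true_of_subsingleton]⟩,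
    fun _ hb => (hb 0).elim⟩

theorem oneWinsG1_of_twoWinsTheta (h : TwoWinsTheta X) :
    OneWinsG1 (OpenCovers X) (DenseUnionFams X) := by
  cases isEmpty_or_nonempty X
  · exact oneWinsG1_of_isEmpty
  obtain ⟨τ, hτ⟩ := h
  have hτ' (s : List X) (y : X) : IsOpen (τ (s ++ [y])) ∧ y ∈ τ (s ++ [y]) :=
    of_forall_GHist (P := fun _ => True)
      (Q := fun s y => IsOpen (τ (s ++ [y])) ∧ y ∈ τ (s ++ [y]))
      (fun x _ n => GHist_succ x n ▸ (hτ x).1 n) (by simp) trivial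
  -- ONE offers all possible answers of `τ`; TWO's pick reveals a point that `τ` answers with it.
  let step : List X → Set X → X := fun t U => epsilon fun y => τ (t ++ [y]) = U
  refine ⟨fun h => range fun y => τ (replay step h ++ [y]),
    fun h => range_mem_openCovers (hτ' _), fun U hU hdense => ?_⟩
  set x := fun n => step (replay step (GHist U n)) (U n)
  have hreplay : ∀ n, replay step (GHist U n) = GHist x n := replay_GHist step U
  have hxU n : τ (GHist x (n + 1)) = U n := by
    rw [GHist_succ, ← hreplay]
    exact epsilon_spec (hU n)
  apply (hτ x).2
  simp only [hxU]
  rw [← sUnion_range]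
  exact hdense.2

end Duality

/-- Tkachuk's game `θ(X)` and the game `G₁(𝒪_X, 𝒟_X)` are dual games. -/
theorem statement3 (X : Type*) [TopologicalSpace X] :
    (OneWinsTheta X ↔ TwoWinsG1 (OpenCovers X) (DenseUnionFams X)) ∧
    (TwoWinsTheta X ↔ OneWinsG1 (OpenCovers X) (DenseUnionFams X)) :=
  ⟨⟨twoWinsG1_of_oneWinsTheta, oneWinsTheta_of_twoWinsG1⟩,
    ⟨oneWinsG1_of_twoWinsTheta, twoWinsTheta_of_oneWinsG1⟩⟩
end

section
/- If TWO has a winning strategy in the Rothberger game on a topological space X, then X is productively Rothberger: for every topological space Y satisfying S_1(𝒪_Y, 𝒪_Y), the product space X × Y satisfies S_1(𝒪_{X×Y}, 𝒪_{X×Y}). -/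
open Set

/-!
Galvin: if TWO has a winning strategy `τ` in the Rothberger game on `X`, then for every legal
history there is a point `x` such that every neighbourhood of `x` contains `τ`'s answer to some
cover (otherwise the cover by the bad neighbourhoods defeats `τ`). Playing these points gives ONE
a winning strategy in the point-open game on `X`.

Given open covers `𝒲ₙ` of `X × Y`, index them by the nodes `(s, i)` of the tree `List ℕ × ℕ`.
At a node `s` ONE's strategy names a point `x`; the Rothberger property of `Y` selects, for the
covers attached to the children of `s`, tubes `Uᵢ × Vᵢ` around `{x} × Y` with `⋃ Vᵢ = Y`, and the
open sets `Uᵢ` are TWO's possible moves. For `(x, y)`, follow the branch along which `y ∈ Vᵢ`: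
that play of the point-open game is lost by TWO, so `x` lies in some `Uᵢ` of the branch.
-/

section

variable {X Y : Type*} [TopologicalSpace X] [TopologicalSpace Y]

theorem gHist_succ {β : Type*} (b : ℕ → β) (n : ℕ) :
    GHist b (n + 1) = GHist b n ++ [b n] := by
  simp only [GHist, List.ofFn_succ_last]
  rfl

theorem gHist_getD {β : Type*} (l : List β) (d : β) :
    GHist (fun n => l.getD n d) l.length = l := by
  simp [GHist]

theorem range_mem_openCovers_s8 {ι : Type*} {U : ι → Set X} :
    Set.range U ∈ OpenCovers X ↔ (∀ i, IsOpen (U i)) ∧ ∀ x, ∃ i, x ∈ U i := by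
  simp [OpenCovers, Set.eq_univ_iff_forall]

theorem singleton_univ_mem_openCovers : {Set.univ} ∈ OpenCovers X := by
  simp [OpenCovers]

theorem exists_forall_isOpen_exists_strategy_subset {τ : List (Set (Set X)) → Set X}
    (hτ : ∀ S : ℕ → Set (Set X), (∀ n, S n ∈ OpenCovers X) → ∀ n, τ (GHist S (n + 1)) ∈ S n)
    {l : List (Set (Set X))} (hl : ∀ C ∈ l, C ∈ OpenCovers X) :
    ∃ x, ∀ U, IsOpen U → x ∈ U → ∃ 𝒰 ∈ OpenCovers X, τ (l ++ [𝒰]) ⊆ U := by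
  by_contra! hbad
  choose U hUo hxU hU using hbad
  have hcov : Set.range U ∈ OpenCovers X := range_mem_openCovers_s8.2 ⟨hUo, fun x => ⟨x, hxU x⟩⟩
  set l' := l ++ [Set.range U]
  have hl' : ∀ C ∈ l', C ∈ OpenCovers X := fun C hC =>
    (List.mem_append.1 hC).elim (hl C) fun h => List.mem_singleton.1 h ▸ hcov
  have hS : ∀ n, l'.getD n (Set.range U) ∈ OpenCovers X := by
    intro n
    rcases lt_or_ge n l'.length with hn | hn
    · exact List.getD_eq_getElem _ _ hn ▸ hl' _ (List.getElem_mem hn)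
    · exact List.getD_eq_default _ _ hn ▸ hcov
  have hτl := hτ _ hS l.length
  rw [show l.length + 1 = l'.length by simp [l'], gHist_getD,
    List.getD_eq_getElem _ _ (by simp [l'])] at hτl
  obtain ⟨x, hx⟩ : τ l' ∈ Set.range U := by simpa [l'] using hτl
  exact hU x _ hcov hx.ge

theorem exists_forcing_covers {τ : List (Set (Set X)) → Set X}
    (hτ : ∀ S : ℕ → Set (Set X), (∀ n, S n ∈ OpenCovers X) → ∀ n, τ (GHist S (n + 1)) ∈ S n) :
    ∃ (pt : List (Set (Set X)) → X) (nxt : List (Set (Set X)) → Set X → Set (Set X)),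
      (∀ l U, nxt l U ∈ OpenCovers X) ∧
      ∀ l, (∀ C ∈ l, C ∈ OpenCovers X) → ∀ U, IsOpen U → pt l ∈ U → τ (l ++ [nxt l U]) ⊆ U := by
  classical
  have : Nonempty X :=
    (exists_forall_isOpen_exists_strategy_subset hτ (l := []) (by simp)).nonempty
  choose pt hpt using fun l : List (Set (Set X)) =>
    if hl : ∀ C ∈ l, C ∈ OpenCovers X then
      (exists_forall_isOpen_exists_strategy_subset hτ hl).imp fun _ hx _ => hx
    else ⟨Classical.arbitrary X, fun hl' => absurd hl' hl⟩
  have hforce : ∀ l (U : Set X), ∃ 𝒰 ∈ OpenCovers X,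
      (∀ C ∈ l, C ∈ OpenCovers X) → IsOpen U → pt l ∈ U → τ (l ++ [𝒰]) ⊆ U := fun l U =>
    if h : (∀ C ∈ l, C ∈ OpenCovers X) ∧ IsOpen U ∧ pt l ∈ U then
      (hpt l h.1 U h.2.1 h.2.2).imp fun _ h𝒰 => ⟨h𝒰.1, fun _ _ _ => h𝒰.2⟩
    else ⟨{Set.univ}, singleton_univ_mem_openCovers, fun hl hU hx => absurd ⟨hl, hU, hx⟩ h⟩
  choose nxt hnxt_mem hnxt using hforce
  exact ⟨pt, nxt, hnxt_mem, fun l hl U hU hx => hnxt l U hl hU hx⟩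

theorem oneWinsPointOpen_of_twoWinsG1 (h : TwoWinsG1 (OpenCovers X) (OpenCovers X)) :
    OneWinsPointOpen X := by
  obtain ⟨τ, hτ⟩ := h
  obtain ⟨pt, nxt, hnxt_mem, hnxt⟩ := exists_forcing_covers fun S hS => (hτ S hS).1
  -- `H` turns the open sets played so far into the covers fed to `τ` in the simulated play.
  let H : List (Set X) → List (Set (Set X)) := List.foldl (fun C U => C ++ [nxt C U]) []
  refine ⟨pt ∘ H, fun O hO => range_mem_openCovers_s8.2 ⟨fun n => (hO n).1, fun x => ?_⟩⟩
  let S n := nxt (H (GHist O n)) (O n)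
  have hHS : ∀ n, GHist S n = H (GHist O n) := by
    intro n
    induction n with
    | zero => rfl
    | succ n ih => rw [gHist_succ, gHist_succ, ih]; simp [H, S]
  have hS : ∀ n, S n ∈ OpenCovers X := fun n => hnxt_mem _ _
  have hlegal : ∀ n, ∀ C ∈ H (GHist O n), C ∈ OpenCovers X := by
    intro n C hC
    rw [← hHS, GHist, List.mem_ofFn] at hC
    obtain ⟨i, rfl⟩ := hC
    exact hS i
  obtain ⟨n, hn⟩ := (range_mem_openCovers_s8.1 (hτ S hS).2).2 x
  rw [gHist_succ, hHS] at hn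
  exact ⟨n, hnxt _ (hlegal n) _ (hO n).1 (hO n).2 hn⟩

theorem exists_tube_selection (hY : SelS1 (OpenCovers Y) (OpenCovers Y)) (x : X)
    (𝒲 : ℕ → Set (Set (X × Y))) (h𝒲 : ∀ n, 𝒲 n ∈ OpenCovers (X × Y)) :
    ∃ (U : ℕ → Set X) (V : ℕ → Set Y) (W : ℕ → Set (X × Y)), (∀ n, IsOpen (U n)) ∧
      (∀ n, x ∈ U n) ∧ (∀ n, W n ∈ 𝒲 n) ∧ (∀ n, U n ×ˢ V n ⊆ W n) ∧ ∀ y, ∃ n, y ∈ V n := by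
  let 𝒱 n : Set (Set Y) := {V | IsOpen V ∧ ∃ U, IsOpen U ∧ x ∈ U ∧ ∃ W ∈ 𝒲 n, U ×ˢ V ⊆ W}
  have h𝒱 : ∀ n, 𝒱 n ∈ OpenCovers Y := by
    refine fun n => ⟨fun V hV => hV.1, Set.eq_univ_of_forall fun y => ?_⟩
    obtain ⟨W, hW, hxy⟩ := Set.mem_sUnion.1 ((h𝒲 n).2.symm ▸ Set.mem_univ (x, y))
    obtain ⟨U, V, hU, hV, hxU, hyV, hUV⟩ := isOpen_prod_iff.1 ((h𝒲 n).1 W hW) x y hxy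
    exact ⟨V, ⟨hV, U, hU, hxU, W, hW, hUV⟩, hyV⟩
  obtain ⟨V, hV, hcov⟩ := hY 𝒱 h𝒱
  choose U hU hxU W hW hUV using fun n => (hV n).2
  exact ⟨U, V, W, hU, hxU, hW, hUV, (range_mem_openCovers_s8.1 hcov).2⟩

/-- The open sets played along the node `s`, a list of indices with the most recent first. -/
def treePlay (σ : List (Set X) → X) (U : X → List ℕ → ℕ → Set X) : List ℕ → List (Set X)
  | [] => []
  | i :: s => treePlay σ U s ++ [U (σ (treePlay σ U s)) s i]

theorem exists_mem_treePlay {σ : List (Set X) → X}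
    (hσ : ∀ O : ℕ → Set X, (∀ n, IsOpen (O n) ∧ σ (GHist O n) ∈ O n) →
      Set.range O ∈ OpenCovers X)
    {U : X → List ℕ → ℕ → Set X} (hU : ∀ x s i, IsOpen (U x s i)) (hxU : ∀ x s i, x ∈ U x s i)
    (f : List ℕ → ℕ) (z : X) : ∃ s, z ∈ U (σ (treePlay σ U s)) s (f s) := by
  let node k : List ℕ := (fun s => f s :: s)^[k] []
  let O k := U (σ (treePlay σ U (node k))) (node k) (f (node k))
  have hO : ∀ k, GHist O k = treePlay σ U (node k) := by
    intro k
    induction k with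
    | zero => rfl
    | succ k ih => rw [gHist_succ, ih]; simp only [node, Function.iterate_succ_apply']; rfl
  obtain ⟨k, hk⟩ := (range_mem_openCovers_s8.1 (hσ O fun k => hO k ▸ ⟨hU _ _ _, hxU _ _ _⟩)).2 z
  exact ⟨node k, hk⟩

theorem OneWinsPointOpen.selS1_prod (hX : OneWinsPointOpen X)
    (hY : SelS1 (OpenCovers Y) (OpenCovers Y)) :
    SelS1 (OpenCovers (X × Y)) (OpenCovers (X × Y)) := by
  obtain ⟨σ, hσ⟩ := hX
  intro 𝒲 h𝒲
  let e := Denumerable.eqv (List ℕ × ℕ)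
  choose U V W hU hxU hW hUVW hV using fun x (s : List ℕ) =>
    exists_tube_selection hY x (fun i => 𝒲 (e (s, i))) fun i => h𝒲 _
  let sel (p : List ℕ × ℕ) : Set (X × Y) := W (σ (treePlay σ U p.1)) p.1 p.2
  have hsel : ∀ m, sel (e.symm m) ∈ 𝒲 m := fun m => by
    simpa [sel] using hW (σ (treePlay σ U (e.symm m).1)) (e.symm m).1 (e.symm m).2
  refine ⟨fun m => sel (e.symm m), hsel,
    range_mem_openCovers_s8.2 ⟨fun m => (h𝒲 m).1 _ (hsel m), ?_⟩⟩
  rintro ⟨x, y⟩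
  choose f hf using fun s => hV (σ (treePlay σ U s)) s y
  obtain ⟨s, hs⟩ := exists_mem_treePlay hσ hU hxU f x
  exact ⟨e (s, f s), by simpa [sel] using hUVW _ _ _ ⟨hs, hf s⟩⟩

end

/-- If TWO has a winning strategy in the Rothberger game on `X`, then `X`
is productively Rothberger. -/
theorem statement8 {X : Type*} [TopologicalSpace X]
    (h : TwoWinsG1 (OpenCovers X) (OpenCovers X))
    (Y : Type*) [TopologicalSpace Y]
    (hY : SelS1 (OpenCovers Y) (OpenCovers Y)) :
    SelS1 (OpenCovers (X × Y)) (OpenCovers (X × Y)) :=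
  (oneWinsPointOpen_of_twoWinsG1 h).selS1_prod hY
end
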